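/- Let U = ℝⁿ × (ℝⁿ \ {0}), let L : U → ℝ be smooth, let k ∈ ℝ with k ≠ 1, and suppose L is positively homogeneous of degree k in the fibre variable: L(x, λy) = λᵏ L(x,y) for all λ > 0 and all (x,y) ∈ U. Let G be a canonical semispray coefficient family for L on U and N^j_i = ∂Gʲ/∂yⁱ. Then the semispray derivative S(L) = Σ_j yʲ ∂L/∂xʲ − 2 Σ_j Gʲ ∂L/∂yʲ vanishes identically on U, and consequently the horizontal derivative vanishes: δL/δxⁱ = ∂L/∂xⁱ − Σ_j N^j_i ∂L/∂yʲ = 0 on U for all i (d_hL = 0). -/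

import Mathlib

open scoped ContDiff

/-- The tangent bundle of `ℝⁿ`, identified with `ℝⁿ × ℝⁿ` (base coordinates `x`,
fibre coordinates `y`). -/
abbrev TM (n : ℕ) := (Fin n → ℝ) × (Fin n → ℝ)

/-- Partial derivative of `F` in the `i`-th base coordinate `xⁱ`. -/
noncomputable def pdx {n : ℕ} (F : TM n → ℝ) (i : Fin n) (p : TM n) : ℝ :=
  fderiv ℝ F p (Pi.single i 1, 0)

/-- Partial derivative of `F` in the `i`-th fibre coordinate `yⁱ`. -/
noncomputable def pdy {n : ℕ} (F : TM n → ℝ) (i : Fin n) (p : TM n) : ℝ :=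
  fderiv ℝ F p (0, Pi.single i 1)

/-- The metric tensor `g_ij = ½ ∂²L/∂yⁱ∂yʲ` of a Lagrangian `L`. -/
noncomputable def gmetric {n : ℕ} (L : TM n → ℝ) (i j : Fin n) (p : TM n) : ℝ :=
  (1 / 2) * pdy (pdy L j) i p

/-- Canonical nonlinear connection coefficients `N^j_i = ∂Gʲ/∂yⁱ`. -/
noncomputable def Ncoef {n : ℕ} (G : TM n → Fin n → ℝ) (j i : Fin n) (p : TM n) : ℝ :=
  pdy (fun q => G q j) i p

/-- The semispray derivative `S(F) = Σ_j yʲ ∂F/∂xʲ − 2 Σ_j Gʲ ∂F/∂yʲ`. -/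
noncomputable def sprayDeriv {n : ℕ} (F : TM n → ℝ) (G : TM n → Fin n → ℝ) (p : TM n) : ℝ :=
  ∑ j, p.2 j * pdx F j p - 2 * ∑ j, G p j * pdy F j p

/-- The horizontal derivative `δL/δxⁱ = ∂L/∂xⁱ − Σ_j N^j_i ∂L/∂yʲ`, where
`N^j_i = ∂Gʲ/∂yⁱ` are the canonical nonlinear connection coefficients. -/
noncomputable def hderiv {n : ℕ} (L : TM n → ℝ) (G : TM n → Fin n → ℝ) (i : Fin n)
    (p : TM n) : ℝ :=
  pdx L i p - ∑ j, Ncoef G j i p * pdy L j p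

/-!
Contracting the semispray equation with `yⁱ` and applying Euler's theorem to `∂L/∂xʰ`
(homogeneous of degree `k`) and to `∂L/∂yˡ` (degree `k - 1`) turns it into `(k - 1) S(L) = 0`.
Differentiating the identity `S(L) = 0` in `yⁱ` and substituting the semispray equation once more
gives `∂S(L)/∂yⁱ = 2 δL/δxⁱ`.
-/

open Filter Topology

variable {n : ℕ}

lemma isOpen_setOf_snd_ne_zero : IsOpen {p : TM n | p.2 ≠ 0} :=
  isOpen_compl_singleton.preimage continuous_snd

def IsFibreHomogeneous (F : TM n → ℝ) (m : ℝ) : Prop :=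
  ∀ lam : ℝ, 0 < lam → ∀ p : TM n, p.2 ≠ 0 → F (p.1, lam • p.2) = lam ^ m * F p

def IsCanonicalSemisprayAt (L : TM n → ℝ) (G : TM n → Fin n → ℝ) (p : TM n) : Prop :=
  ∀ i : Fin n, 4 * ∑ l, gmetric L i l p * G p l = ∑ h, p.2 h * pdx (pdy L i) h p - pdx L i p

lemma sum_mul_pdy (F : TM n → ℝ) (p : TM n) (y : Fin n → ℝ) :
    ∑ j, y j * pdy F j p = fderiv ℝ F p (0, y) := by
  have hy : ((0, y) : TM n) = ∑ j, y j • ((0, Pi.single j 1) : TM n) := by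
    ext <;> simp [Prod.fst_sum, Prod.snd_sum, Pi.single_apply]
  rw [hy, map_sum]
  simp only [map_smul, smul_eq_mul, pdy]

namespace IsFibreHomogeneous

variable {F : TM n → ℝ} {m : ℝ}

lemma sum_mul_pdy_eq (hF : IsFibreHomogeneous F m) {p : TM n} (hd : DifferentiableAt ℝ F p)
    (hp : p.2 ≠ 0) : ∑ j, p.2 j * pdy F j p = m * F p := by
  have hray : HasDerivAt (fun lam : ℝ => ((p.1, lam • p.2) : TM n)) (0, p.2) 1 :=
    (hasDerivAt_const _ _).prodMk (by simpa using (hasDerivAt_id (1 : ℝ)).smul_const p.2)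
  have hchain : HasDerivAt (fun lam : ℝ => F (p.1, lam • p.2)) (fderiv ℝ F p (0, p.2)) 1 := by
    refine HasFDerivAt.comp_hasDerivAt (f := fun lam : ℝ => ((p.1, lam • p.2) : TM n)) 1 ?_ hray
    simpa using hd.hasFDerivAt
  have hpow : HasDerivAt (fun lam : ℝ => F (p.1, lam • p.2)) (m * F p) 1 := by
    refine HasDerivAt.congr_of_eventuallyEq ?_
      (eventually_gt_nhds one_pos |>.mono fun lam hlam => hF lam hlam p hp)
    simpa using (Real.hasDerivAt_rpow_const (p := m) (Or.inl one_ne_zero)).mul_const (F p)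
  rw [sum_mul_pdy, hchain.unique hpow]

lemma fderiv_apply_smul_snd (hF : IsFibreHomogeneous F m)
    (hd : DifferentiableOn ℝ F {q : TM n | q.2 ≠ 0}) {lam : ℝ} (hlam : 0 < lam)
    {p : TM n} (hp : p.2 ≠ 0) (v : TM n) :
    fderiv ℝ F (p.1, lam • p.2) (v.1, lam • v.2) = lam ^ m * fderiv ℝ F p v := by
  let T : TM n →L[ℝ] TM n :=
    (ContinuousLinearMap.id ℝ _).prodMap (lam • ContinuousLinearMap.id ℝ _)
  have hTp : (T p).2 ≠ 0 := smul_ne_zero hlam.ne' hp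
  have hchain : HasFDerivAt (F ∘ T) ((fderiv ℝ F (T p)).comp T) p :=
    ((hd.differentiableAt (isOpen_setOf_snd_ne_zero.mem_nhds hTp)).hasFDerivAt).comp p
      T.hasFDerivAt
  have hscaled : HasFDerivAt (F ∘ T) (lam ^ m • fderiv ℝ F p) p := by
    refine ((hd.differentiableAt (isOpen_setOf_snd_ne_zero.mem_nhds hp)).hasFDerivAt.const_mul
      (lam ^ m)).congr_of_eventuallyEq ?_
    filter_upwards [isOpen_setOf_snd_ne_zero.mem_nhds hp] with q hq
    exact hF lam hlam q hq
  exact congrArg (· v) (hchain.unique hscaled)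

lemma pdx (hF : IsFibreHomogeneous F m) (hd : DifferentiableOn ℝ F {q : TM n | q.2 ≠ 0})
    (i : Fin n) : IsFibreHomogeneous (pdx F i) m :=
  fun lam hlam p hp => by
    simpa [_root_.pdx] using hF.fderiv_apply_smul_snd hd hlam hp (Pi.single i 1, 0)

lemma pdy (hF : IsFibreHomogeneous F m) (hd : DifferentiableOn ℝ F {q : TM n | q.2 ≠ 0})
    (i : Fin n) : IsFibreHomogeneous (pdy F i) (m - 1) :=
  fun lam hlam p hp => by
    have h := hF.fderiv_apply_smul_snd hd hlam hp (0, Pi.single i 1)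
    rw [show ((0 : Fin n → ℝ), lam • (Pi.single i 1 : Fin n → ℝ))
      = lam • ((0, Pi.single i 1) : TM n) by simp, map_smul, smul_eq_mul] at h
    rw [Real.rpow_sub_one hlam.ne', div_mul_eq_mul_div, eq_div_iff hlam.ne']
    exact (mul_comm _ _).trans h

end IsFibreHomogeneous

section SecondDerivatives

variable {F : TM n → ℝ} {p : TM n}

lemma ContDiffAt.differentiableAt_pdx (hF : ContDiffAt ℝ 2 F p) (i : Fin n) :
    DifferentiableAt ℝ (pdx F i) p :=
  ((hF.fderiv_right (m := 1) le_rfl).differentiableAt one_ne_zero).clm_apply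
    (differentiableAt_const _)

lemma ContDiffAt.differentiableAt_pdy (hF : ContDiffAt ℝ 2 F p) (i : Fin n) :
    DifferentiableAt ℝ (pdy F i) p :=
  ((hF.fderiv_right (m := 1) le_rfl).differentiableAt one_ne_zero).clm_apply
    (differentiableAt_const _)

lemma fderiv_fderiv_apply_comm (hF : ContDiffAt ℝ 2 F p) (v w : TM n) :
    fderiv ℝ (fun q => fderiv ℝ F q v) p w = fderiv ℝ (fun q => fderiv ℝ F q w) p v := by
  have hd : DifferentiableAt ℝ (fderiv ℝ F) p :=
    (hF.fderiv_right (m := 1) le_rfl).differentiableAt one_ne_zero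
  rw [fderiv_clm_apply hd (differentiableAt_const v),
    fderiv_clm_apply hd (differentiableAt_const w)]
  simpa using (hF.isSymmSndFDerivAt (by simp)) w v

lemma pdx_pdy_comm (hF : ContDiffAt ℝ 2 F p) (i h : Fin n) :
    pdx (pdy F i) h p = pdy (pdx F h) i p :=
  fderiv_fderiv_apply_comm hF _ _

end SecondDerivatives

section Semispray

variable {L : TM n → ℝ} {G : TM n → Fin n → ℝ} {p : TM n}

lemma sprayDeriv_eq_zero_of_euler {k : ℝ} (hk : k ≠ 1) (hG : IsCanonicalSemisprayAt L G p)
    (hsymm : ∀ i h, pdx (pdy L i) h p = pdy (pdx L h) i p)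
    (hx : ∀ h, ∑ i, p.2 i * pdy (pdx L h) i p = k * pdx L h p)
    (hy : ∀ l, ∑ i, p.2 i * pdy (pdy L l) i p = (k - 1) * pdy L l p) :
    sprayDeriv L G p = 0 := by
  have hlhs : ∑ i, p.2 i * (4 * ∑ l, gmetric L i l p * G p l)
      = 2 * (k - 1) * ∑ l, G p l * pdy L l p :=
    calc _ = ∑ l, 2 * G p l * ∑ i, p.2 i * pdy (pdy L l) i p := by
          simp only [Finset.mul_sum, gmetric]
          rw [Finset.sum_comm]
          exact Finset.sum_congr rfl fun l _ => Finset.sum_congr rfl fun i _ => by ring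
      _ = _ := by
          simp only [hy, Finset.mul_sum]
          exact Finset.sum_congr rfl fun l _ => by ring
  have hrhs : ∑ i, p.2 i * (∑ h, p.2 h * pdx (pdy L i) h p - pdx L i p)
      = (k - 1) * ∑ h, p.2 h * pdx L h p :=
    calc _ = ∑ h, p.2 h * ∑ i, p.2 i * pdy (pdx L h) i p - ∑ h, p.2 h * pdx L h p := by
          simp only [mul_sub, Finset.sum_sub_distrib, Finset.mul_sum, hsymm]
          rw [Finset.sum_comm]
          exact congrArg (· - _) (Finset.sum_congr rfl fun h _ =>
            Finset.sum_congr rfl fun i _ => by ring)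
      _ = _ := by
          simp only [hx, mul_left_comm _ k, ← Finset.mul_sum]
          ring
  have hcontract :
      2 * (k - 1) * ∑ l, G p l * pdy L l p = (k - 1) * ∑ h, p.2 h * pdx L h p := by
    rw [← hlhs, ← hrhs]
    exact Finset.sum_congr rfl fun i _ => by rw [hG i]
  refine (mul_eq_zero.1 ?_).resolve_left (sub_ne_zero.2 hk)
  rw [sprayDeriv]
  linear_combination -hcontract

lemma pdy_sprayDeriv (hL : ContDiffAt ℝ 2 L p) (hG : DifferentiableAt ℝ G p) (i : Fin n) :
    pdy (sprayDeriv L G) i p = pdx L i p + ∑ j, p.2 j * pdy (pdx L j) i p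
      - 2 * ∑ j, (Ncoef G j i p * pdy L j p + G p j * pdy (pdy L j) i p) := by
  have hGj : ∀ j, DifferentiableAt ℝ (fun q => G q j) p := differentiableAt_pi.1 hG
  have hx := hL.differentiableAt_pdx
  have hy := hL.differentiableAt_pdy
  have hc : ∀ j, DifferentiableAt ℝ (fun q : TM n => q.2 j) p := fun j => by fun_prop
  have hcoord : ∀ j, fderiv ℝ (fun q : TM n => q.2 j) p (0, Pi.single i 1)
      = (Pi.single i 1 : Fin n → ℝ) j := fun j => by
    rw [fderiv_apply differentiableAt_snd, fderiv_snd]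
    rfl
  unfold sprayDeriv
  rw [pdy, fderiv_fun_sub (by fun_prop) (by fun_prop), fderiv_const_mul (by fun_prop),
    fderiv_fun_sum fun j _ => by fun_prop, fderiv_fun_sum fun j _ => by fun_prop]
  simp only [fderiv_fun_mul (hc _) (hx _), fderiv_fun_mul (hGj _) (hy _), sub_apply, sum_apply,
    add_apply, smul_apply, smul_eq_mul, hcoord, Pi.single_apply, mul_ite, mul_one, mul_zero,
    Finset.sum_add_distrib, Finset.sum_ite_eq', Finset.mem_univ, if_true]
  simp only [pdy, Ncoef, mul_comm (fderiv ℝ L p _), mul_add]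
  ring

lemma hderiv_eq_half_pdy_sprayDeriv (hL : ContDiffAt ℝ 2 L p) (hG : DifferentiableAt ℝ G p)
    (hGp : IsCanonicalSemisprayAt L G p) (i : Fin n) :
    hderiv L G i p = pdy (sprayDeriv L G) i p / 2 := by
  have hsemi :
      2 * ∑ j, G p j * pdy (pdy L j) i p = ∑ j, p.2 j * pdy (pdx L j) i p - pdx L i p :=
    calc _ = 4 * ∑ l, gmetric L i l p * G p l := by
          simp only [gmetric, Finset.mul_sum]
          exact Finset.sum_congr rfl fun _ _ => by ring
      _ = _ := by simp only [hGp i, pdx_pdy_comm hL]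
  rw [pdy_sprayDeriv hL hG, Finset.sum_add_distrib, hderiv]
  linear_combination hsemi / 2

end Semispray

/-- if `L` is positively homogeneous of degree `k ≠ 1` in the fibre
variable on `U = ℝⁿ × (ℝⁿ \\ {0})`, and `G` is a canonical semispray coefficient
family for `L` on `U`, then `S(L) = 0` on `U` and consequently `d_hL = 0` on `U`. -/
theorem homogeneous_lagrangian_is_conservation_law (n : ℕ) (L : TM n → ℝ) (k : ℝ)
    (hk : k ≠ 1)
    (hL : ContDiffOn ℝ ∞ L {p : TM n | p.2 ≠ 0})
    (hhom : ∀ lam : ℝ, 0 < lam → ∀ p : TM n, p.2 ≠ 0 →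
      L (p.1, lam • p.2) = lam ^ k * L p)
    (G : TM n → Fin n → ℝ) (hGsmooth : ContDiffOn ℝ ∞ G {p : TM n | p.2 ≠ 0})
    (hG : ∀ p : TM n, p.2 ≠ 0 → ∀ i : Fin n,
      4 * ∑ l, gmetric L i l p * G p l = ∑ h, p.2 h * pdx (pdy L i) h p - pdx L i p) :
    (∀ p : TM n, p.2 ≠ 0 → sprayDeriv L G p = 0) ∧
    (∀ p : TM n, p.2 ≠ 0 → ∀ i : Fin n, hderiv L G i p = 0) := by
  have hU := isOpen_setOf_snd_ne_zero (n := n)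
  have hhom' : IsFibreHomogeneous L k := hhom
  have hL2 : ∀ p : TM n, p.2 ≠ 0 → ContDiffAt ℝ 2 L p := fun p hp =>
    (hL.contDiffAt (hU.mem_nhds hp)).of_le ENat.LEInfty.out
  have hLd : DifferentiableOn ℝ L {p : TM n | p.2 ≠ 0} := hL.differentiableOn (by simp)
  have hS : ∀ p : TM n, p.2 ≠ 0 → sprayDeriv L G p = 0 := fun p hp =>
    sprayDeriv_eq_zero_of_euler hk (hG p hp) (pdx_pdy_comm (hL2 p hp))
      (fun h => (hhom'.pdx hLd h).sum_mul_pdy_eq ((hL2 p hp).differentiableAt_pdx h) hp)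
      (fun l => (hhom'.pdy hLd l).sum_mul_pdy_eq ((hL2 p hp).differentiableAt_pdy l) hp)
  refine ⟨hS, fun p hp i => ?_⟩
  have hS_nhds : sprayDeriv L G =ᶠ[𝓝 p] 0 := eventually_of_mem (hU.mem_nhds hp) hS
  rw [hderiv_eq_half_pdy_sprayDeriv (hL2 p hp)
    ((hGsmooth.differentiableOn (by simp)).differentiableAt (hU.mem_nhds hp)) (hG p hp),
    pdy, hS_nhds.fderiv_eq]
  simp
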